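/- Let A be a random variable in a countable space, Y integrable, 𝒢 a sub-sigma-algebra, and a a fixed value with P(A = a) > 0. Suppose E[Y | 𝒢 ⊔ σ(A)] = E[Y | 𝒢] almost surely. Then E[Y · 1_{A=a}] = E[E[Y | 𝒢] · 1_{A=a}]. -/

import Mathlib

open MeasureTheory ProbabilityTheory MeasurableSpace

theorem stmt9 {Ω S : Type*} {𝒢 : MeasurableSpace Ω} [mΩ : MeasurableSpace Ω] [MeasurableSpace S] [Countable S]
    [MeasurableSingletonClass S]
    {P : Measure Ω} [IsProbabilityMeasure P] (h𝒢 : 𝒢 ≤ mΩ)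
    (A : Ω → S) (hA : Measurable A) (a : S) (hpos : 0 < P {ω | A ω = a})
    (Y : Ω → ℝ) (hY : Integrable Y P)
    (heq : P[Y | 𝒢 ⊔ MeasurableSpace.comap A inferInstance] =ᵐ[P] P[Y | 𝒢]) :
    ∫ ω, Y ω * {w | A w = a}.indicator (fun _ => (1:ℝ)) ω ∂P
      = ∫ ω, (P[Y|𝒢]) ω * {w | A w = a}.indicator (fun _ => (1:ℝ)) ω ∂P := by
  have hm : 𝒢 ⊔ MeasurableSpace.comap A inferInstance ≤ mΩ :=
    sup_le h𝒢 hA.comap_le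
  have hs : MeasurableSet[mΩ] ({w | A w = a}) := hA (measurableSet_singleton a)
  have hsm : MeasurableSet[𝒢 ⊔ MeasurableSpace.comap A inferInstance] ({w | A w = a}) :=
    le_sup_right (a := 𝒢) _ ⟨{a}, measurableSet_singleton a, rfl⟩
  have h1 : ∀ (f : Ω → ℝ),
      (∫ ω, f ω * {w | A w = a}.indicator (fun _ => (1:ℝ)) ω ∂P)
        = ∫ ω in {w | A w = a}, f ω ∂P := by
    intro f
    rw [← @integral_indicator Ω ℝ mΩ _ _ f _ P hs]
    congr 1
    ext ω
    by_cases h : ω ∈ {w | A w = a} <;>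
      simp [Set.indicator_of_mem, Set.indicator_of_notMem, h]
  rw [h1, h1]
  have h2 : ∫ ω in {w | A w = a}, (P[Y|𝒢 ⊔ MeasurableSpace.comap A inferInstance]) ω ∂P
      = ∫ ω in {w | A w = a}, Y ω ∂P :=
    setIntegral_condExp hm hY hsm
  rw [← h2]
  exact @setIntegral_congr_ae Ω ℝ mΩ _ _ _ _ _ P hs (heq.mono fun ω hω _ => hω)
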